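/- For every g ≥ 1 the genus-g free energies of the resolved conifold satisfy the recursion Σ_{k=0}^{g} 1/((2g−2k+2)!)·((1/2π)·∂/∂t)^{2g−2k+2} F̃ᵏ(t) = 0, equivalently, coefficient-wise in q: for each n ≥ 1 and g ≥ 1, Σ_{k=0}^{g} (in)^{2g−2k+2}/((2g−2k+2)!)·aₖ·n^{−3+2k} = 0, where a₀ = 1 and aₖ = (−1)^{k−1}B_{2k}/(2k·(2k−2)!) for k ≥ 1. -/

import Mathlib

open Complex

/-- The genus-`k` coefficients: `a₀ = 1`, `aₖ = (−1)^{k−1}·B_{2k}/(2k·(2k−2)!)` for `k ≥ 1`. -/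
noncomputable def genusCoeff (k : ℕ) : ℂ :=
  if k = 0 then 1
  else (-1) ^ (k - 1) * ((bernoulli (2 * k) : ℚ) : ℂ) / (2 * k * (2 * k - 2).factorial)

/-!
Since `(I n)^{2g-2k+2} n^{2k-3} = (-1)^{g+1} n^{2g-1} (-1)^k`, the claim reduces to
`∑_{k ≤ g} (-1)^k a_k / (2g-2k+2)! = 0`, which after multiplication by `(2g+2)!` reads
`∑_{j=1}^{g} (2j-1) C(2g+2, 2j) B_{2j} = 1`. With `m = 2g+2`, this is the even part of
`∑_i C(m,i) (i-1) B_i = (m-1) B_m - m B'_{m-1}`, obtained by subtracting the value at `1` of the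
derivative `(B_m(X))' = m B_{m-1}(X)` from `(m-1) ∑_i C(m,i) B_i = (m-1) B_m`; here `B'_{m-1} = 0`
because `m-1` is odd.
-/

open Finset

theorem Finset.sum_range_two_mul {M : Type*} [AddCommMonoid M] (f : ℕ → M) (N : ℕ) :
    ∑ i ∈ range (2 * N), f i = ∑ j ∈ range N, (f (2 * j) + f (2 * j + 1)) := by
  induction N with
  | zero => simp
  | succ N ih =>
    rw [mul_add, mul_one, sum_range_succ, sum_range_succ, sum_range_succ, ih, add_assoc]

theorem sum_choose_mul_bernoulli_of_ne_one {m : ℕ} (hm : m ≠ 1) :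
    ∑ i ∈ range (m + 1), (m.choose i : ℚ) * bernoulli i = bernoulli m := by
  simp [sum_range_succ, hm]

theorem sum_choose_mul_sub_mul_bernoulli (m : ℕ) :
    ∑ i ∈ range (m + 1), (m.choose i : ℚ) * (m - i) * bernoulli i =
      m * bernoulli' (m - 1) := by
  open Polynomial in
  have h : (derivative (bernoulli m)).eval 1 = m * bernoulli' (m - 1) := by
    rw [derivative_bernoulli, eval_mul, eval_natCast, bernoulli_eval_one]
  simp only [Polynomial.bernoulli, Polynomial.derivative_sum, Polynomial.derivative_monomial,
    Polynomial.eval_finsetSum, Polynomial.eval_monomial, one_pow, mul_one] at h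
  rw [← h]
  refine sum_congr rfl fun i hi => ?_
  rw [Nat.cast_sub (by simpa [Nat.lt_succ_iff] using hi)]
  ring

theorem sum_choose_mul_sub_one_mul_bernoulli {m : ℕ} (hm : m ≠ 1) :
    ∑ i ∈ range (m + 1), (m.choose i : ℚ) * (i - 1) * bernoulli i =
      (m - 1) * bernoulli m - m * bernoulli' (m - 1) := by
  rw [← sum_choose_mul_bernoulli_of_ne_one hm, ← sum_choose_mul_sub_mul_bernoulli, mul_sum,
    ← sum_sub_distrib]
  refine sum_congr rfl fun i _ => ?_
  ring

theorem sum_choose_two_mul_add_two_mul_bernoulli {g : ℕ} (hg : 1 ≤ g) :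
    ∑ j ∈ range g,
      ((2 * g + 2).choose (2 * j + 2) : ℚ) * (2 * j + 1) * bernoulli (2 * j + 2) = 1 := by
  set m := 2 * g + 2
  set f : ℕ → ℚ := fun i => (m.choose i : ℚ) * (i - 1) * bernoulli i with hf
  have hodd : ∀ j, f (2 * j + 1) = 0 := by
    intro j
    rcases Nat.eq_zero_or_pos j with rfl | hj
    · simp [hf]
    · simp [hf, bernoulli_eq_zero_of_odd (odd_two_mul_add_one j) (by omega)]
  have htotal : ∑ i ∈ range (m + 1), f i = (m - 1) * bernoulli m := by
    rw [sum_choose_mul_sub_one_mul_bernoulli (by omega),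
      bernoulli'_eq_zero_of_odd ⟨g, by omega⟩ (by omega), mul_zero, sub_zero]
  rw [show m + 1 = 2 * (g + 1) + 1 by omega, sum_range_succ, sum_range_two_mul] at htotal
  simp only [hodd, add_zero, sum_range_succ'] at htotal
  rw [show 2 * (g + 1) = m by omega] at htotal
  have hm : f m = (m - 1) * bernoulli m := by simp [hf]
  have h0 : f (2 * 0) = -1 := by simp [hf]
  rw [hm, h0] at htotal
  calc _ = ∑ j ∈ range g, f (2 * (j + 1)) := sum_congr rfl fun j _ => by
          simp only [hf]; push_cast; ring_nf
    _ = 1 := by linarith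

theorem genusCoeff_succ (k : ℕ) :
    genusCoeff (k + 1) =
      (-1) ^ k * ((bernoulli (2 * k + 2) : ℚ) : ℂ) / ((2 * k + 2) * (2 * k).factorial) := by
  rw [genusCoeff, if_neg k.succ_ne_zero, Nat.add_sub_cancel, mul_add_one,
    Nat.add_sub_cancel]
  push_cast
  ring

theorem sum_neg_one_pow_mul_genusCoeff_div_factorial {g : ℕ} (hg : 1 ≤ g) :
    ∑ k ∈ range (g + 1), (-1) ^ k * genusCoeff k / ((2 * g - 2 * k + 2).factorial : ℂ) =
      0 := by
  set F : ℂ := ((2 * g + 2).factorial : ℂ) with hFdef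
  have hF : F ≠ 0 := Nat.cast_ne_zero.mpr (Nat.factorial_ne_zero _)
  have hsum : ∑ j ∈ range g,
      ((2 * g + 2).choose (2 * j + 2) : ℂ) * (2 * j + 1) * ((bernoulli (2 * j + 2) : ℚ) : ℂ) =
        1 := by
    exact_mod_cast congrArg (Rat.cast : ℚ → ℂ) (sum_choose_two_mul_add_two_mul_bernoulli hg)
  have hterm : ∀ j ∈ range g, F * ((-1) ^ (j + 1) * genusCoeff (j + 1) /
      ((2 * g - 2 * (j + 1) + 2).factorial : ℂ)) =
      -(((2 * g + 2).choose (2 * j + 2) : ℂ) * (2 * j + 1) *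
        ((bernoulli (2 * j + 2) : ℚ) : ℂ)) := by
    intro j hj
    have hjg : j < g := mem_range.mp hj
    have hfac : F = ((2 * g + 2).choose (2 * j + 2) : ℂ) *
        ((2 * j + 2) * (2 * j + 1) * (2 * j).factorial) * (2 * g - 2 * (j + 1) + 2).factorial := by
      rw [hFdef, ← Nat.choose_mul_factorial_mul_factorial (by omega : 2 * j + 2 ≤ 2 * g + 2),
        show 2 * g + 2 - (2 * j + 2) = 2 * g - 2 * (j + 1) + 2 by omega]
      push_cast [Nat.factorial_succ]
      ring
    have hsign : ((-1 : ℂ) ^ (j + 1) * (-1) ^ j) = -1 := by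
      rw [← pow_add]; exact Odd.neg_one_pow ⟨j, by ring⟩
    have h1 : (2 * j + 2 : ℂ) ≠ 0 := by exact_mod_cast (2 * j + 1).succ_ne_zero
    have h2 : ((2 * j).factorial : ℂ) ≠ 0 := Nat.cast_ne_zero.mpr (Nat.factorial_ne_zero _)
    have h3 : ((2 * g - 2 * (j + 1) + 2).factorial : ℂ) ≠ 0 :=
      Nat.cast_ne_zero.mpr (Nat.factorial_ne_zero _)
    rw [hfac, genusCoeff_succ]
    field_simp
    linear_combination (((2 * g + 2).choose (2 * j + 2) : ℂ) * (2 * j + 1) *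
      ((bernoulli (2 * j + 2) : ℚ) : ℂ)) * hsign
  refine (mul_eq_zero.mp ?_).resolve_left hF
  rw [mul_sum, sum_range_succ', sum_congr rfl hterm, sum_neg_distrib, hsum]
  simp [genusCoeff, hF, ← hFdef]

theorem I_mul_pow_mul_zpow (z : ℂ) {g k : ℕ} (hk : k ≤ g) :
    (I * z) ^ (2 * g - 2 * k + 2) * z ^ (2 * (k : ℤ) - 3) =
      (-1) ^ (g + 1) * z ^ (2 * (g : ℤ) - 1) * (-1) ^ k := by
  have hsign : (-1 : ℂ) ^ (g + 1 - k) = (-1) ^ (g + 1) * (-1) ^ k := by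
    rw [← pow_add, show g + 1 + k = (g + 1 - k) + 2 * k by omega, pow_add, pow_mul, neg_one_sq,
      one_pow, mul_one]
  have hexp : z ^ (2 * (g + 1 - k)) * z ^ (2 * (k : ℤ) - 3) = z ^ (2 * (g : ℤ) - 1) := by
    rw [← zpow_natCast, ← zpow_add' (Or.inr (Or.inl (by omega)))]
    congr 1
    omega
  rw [show 2 * g - 2 * k + 2 = 2 * (g + 1 - k) by omega, pow_mul, mul_pow, I_sq, neg_one_mul,
    neg_pow, ← pow_mul, hsign, mul_assoc, hexp]
  ring

theorem genus_recursion_general (n : ℕ) (g : ℕ) (hg : 1 ≤ g) :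
    ∑ k ∈ Finset.range (g + 1),
      (I * n) ^ (2 * g - 2 * k + 2) / ((2 * g - 2 * k + 2).factorial : ℂ) *
        genusCoeff k * (n : ℂ) ^ (2 * (k : ℤ) - 3) = 0 := by
  calc _ = ∑ k ∈ range (g + 1), (-1) ^ (g + 1) * (n : ℂ) ^ (2 * (g : ℤ) - 1) *
        ((-1) ^ k * genusCoeff k / ((2 * g - 2 * k + 2).factorial : ℂ)) := by
        refine sum_congr rfl fun k hk => ?_
        have h := I_mul_pow_mul_zpow (n : ℂ) (Nat.lt_succ_iff.mp (mem_range.mp hk))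
        linear_combination (genusCoeff k / ((2 * g - 2 * k + 2).factorial : ℂ)) * h
    _ = 0 := by rw [← mul_sum, sum_neg_one_pow_mul_genusCoeff_div_factorial hg, mul_zero]

/-- The genus recursion `Σ_{k=0}^{g} 1/((2g−2k+2)!)·((1/2π)∂_t)^{2g−2k+2} F̃ᵏ(t) = 0` for the
resolved conifold, coefficient-wise in `q`: for each `n ≥ 1` and `g ≥ 1`,
`Σ_{k=0}^{g} (in)^{2g−2k+2}/((2g−2k+2)!)·aₖ·n^{2k−3} = 0`. -/
theorem genus_recursion (n : ℕ) (hn : 1 ≤ n) (g : ℕ) (hg : 1 ≤ g) :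
    ∑ k ∈ Finset.range (g + 1),
      (I * n) ^ (2 * g - 2 * k + 2) / ((2 * g - 2 * k + 2).factorial : ℂ) *
        genusCoeff k * (n : ℂ) ^ (2 * (k : ℤ) - 3) = 0 :=
  genus_recursion_general n g hg
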